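/- arXiv:2512.12781 — 4 statements merged into one kernel-verified Lean document; each statement's English description precedes it below -/
import Mathlib

section
/- Let q > 1, τ* > 0, δ ≥ 0, and consider the homogeneous-treatment-effect objective M(τ) = |τ* - τ| + δ·(2 + |τ|^q)^(1/q). Then τ = τ* is a global minimizer of M if and only if δ·(τ*)^(q-1)·(2 + (τ*)^q)^(1/q - 1) ≤ 1, equivalently δ ≤ (2/(τ*)^q + 1)^(1 - 1/q). -/
/-!
Write `M τ = |τs - τ| + δ g τ` with `g t = (2 + |t| ^ q) ^ (1 / q)`, the `q`-norm of
`(2 ^ (1 / q), t)`. On `[0, ∞)` the derivative `g' t = t ^ (q - 1) (2 + t ^ q) ^ (1 / q - 1)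
= (2 / t ^ q + 1) ^ (1 / q - 1)` is increasing, so `g` is convex there. As `g` is even and
`|τs - |τ|| ≤ |τs - τ|`, the tangent line of `g` at `τs` gives
`M τ - M τs ≥ |τs - τ| - δ g' τs |τs - |τ||`, which is nonnegative when `δ g' τs ≤ 1`.
Conversely, minimality at `τs` bounds the left difference quotients of `δ g` at `τs` by `1`.
-/

open Real Set Filter Topology

noncomputable def smoothAbs (a q t : ℝ) : ℝ := (a + |t| ^ q) ^ (1 / q)

section Convex

variable {S : Set ℝ} {f : ℝ → ℝ} {x y f' : ℝ}

theorem ConvexOn.add_mul_sub_le_of_hasDerivAt (hfc : ConvexOn ℝ S f) (hx : x ∈ S) (hy : y ∈ S)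
    (hf : HasDerivAt f f' x) : f x + f' * (y - x) ≤ f y := by
  rcases lt_trichotomy x y with hxy | rfl | hyx
  · have := hfc.le_slope_of_hasDerivAt hx hy hxy hf
    rw [slope_def_field, le_div_iff₀ (sub_pos.2 hxy)] at this
    linarith
  · simp
  · have := hfc.slope_le_of_hasDerivAt hy hx hyx hf
    rw [slope_def_field, div_le_iff₀ (sub_pos.2 hyx)] at this
    linarith

end Convex

theorem HasDerivAt.le_of_forall_lt_sub_le {f : ℝ → ℝ} {f' x C : ℝ} (hf : HasDerivAt f f' x)
    (h : ∀ y < x, f x - f y ≤ C * (x - y)) : f' ≤ C := by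
  have hslope : Tendsto (slope f x) (𝓝[<] x) (𝓝 f') :=
    (hasDerivAt_iff_tendsto_slope.1 hf).mono_left (nhdsWithin_mono _ fun y hy => ne_of_lt hy)
  refine le_of_tendsto hslope (eventually_nhdsWithin_of_forall fun y (hy : y < x) => ?_)
  rw [slope_comm, slope_def_field, div_le_iff₀ (sub_pos.2 hy)]
  exact h y hy

section SmoothAbs

variable {a q t : ℝ}

@[simp]
theorem smoothAbs_abs : smoothAbs a q |t| = smoothAbs a q t := by
  simp [smoothAbs]

theorem smoothAbs_of_nonneg (ht : 0 ≤ t) : smoothAbs a q t = (a + t ^ q) ^ (1 / q) := by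
  rw [smoothAbs, abs_of_nonneg ht]

theorem rpow_sub_one_mul_add_rpow_rpow_eq_inv (ha : 0 ≤ a) (hq : q ≠ 0) (ht : 0 < t) :
    t ^ (q - 1) * (a + t ^ q) ^ (1 / q - 1) = ((a / t ^ q + 1) ^ (1 - 1 / q))⁻¹ := by
  have htq : 0 < t ^ q := rpow_pos_of_pos ht q
  have hatq : 0 < a + t ^ q := by positivity
  rw [← rpow_neg (by positivity), show a / t ^ q + 1 = (a + t ^ q) / t ^ q by field_simp,
    div_rpow hatq.le htq.le, ← rpow_mul ht.le,
    show q * -(1 - 1 / q) = -(q - 1) by field_simp, rpow_neg ht.le, div_inv_eq_mul,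
    neg_sub, mul_comm]

theorem hasDerivAt_smoothAbs (ha : 0 ≤ a) (hq : q ≠ 0) (ht : 0 < t) :
    HasDerivAt (smoothAbs a q) (t ^ (q - 1) * (a + t ^ q) ^ (1 / q - 1)) t := by
  have hatq : 0 < a + t ^ q := by positivity
  have hpow : HasDerivAt (fun s : ℝ => (a + s ^ q) ^ (1 / q))
      (q * t ^ (q - 1) * (1 / q) * (a + t ^ q) ^ (1 / q - 1)) t :=
    ((hasDerivAt_rpow_const (Or.inl ht.ne')).const_add a).rpow_const (Or.inl hatq.ne')
  have heq : (fun s : ℝ => (a + s ^ q) ^ (1 / q)) =ᶠ[𝓝 t] smoothAbs a q :=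
    eventually_of_mem (Ioi_mem_nhds ht) fun s hs => (smoothAbs_of_nonneg hs.le).symm
  refine (hpow.congr_of_eventuallyEq heq.symm).congr_deriv ?_
  field_simp

theorem monotoneOn_rpow_sub_one_mul_add_rpow_rpow (ha : 0 ≤ a) (hq : 1 ≤ q) :
    MonotoneOn (fun t => t ^ (q - 1) * (a + t ^ q) ^ (1 / q - 1)) (Ioi 0) := by
  intro s (hs : 0 < s) t (ht : 0 < t) hst
  have hq0 : q ≠ 0 := by positivity
  simp only [rpow_sub_one_mul_add_rpow_rpow_eq_inv ha hq0 hs,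
    rpow_sub_one_mul_add_rpow_rpow_eq_inv ha hq0 ht]
  have hexp : 0 ≤ 1 - 1 / q := by
    rw [sub_nonneg, div_le_one (by positivity)]; exact hq
  gcongr

theorem continuous_smoothAbs (hq : 0 < q) : Continuous (smoothAbs a q) :=
  (continuous_const.add (continuous_abs.rpow_const fun _ => Or.inr hq.le)).rpow_const
    fun _ => Or.inr (by positivity)

theorem convexOn_smoothAbs_Ici (ha : 0 ≤ a) (hq : 1 ≤ q) :
    ConvexOn ℝ (Ici 0) (smoothAbs a q) := by
  have hq0 : q ≠ 0 := by positivity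
  have hderiv : ∀ t ∈ interior (Ici (0 : ℝ)),
      HasDerivAt (smoothAbs a q) (t ^ (q - 1) * (a + t ^ q) ^ (1 / q - 1)) t := by
    rw [interior_Ici]
    exact fun t ht => hasDerivAt_smoothAbs ha hq0 ht
  refine MonotoneOn.convexOn_of_deriv (convex_Ici 0)
    (continuous_smoothAbs (by positivity)).continuousOn
    (fun t ht => (hderiv t ht).differentiableAt.differentiableWithinAt) ?_
  rw [interior_Ici] at hderiv ⊢
  exact (monotoneOn_rpow_sub_one_mul_add_rpow_rpow ha hq).congr fun t ht =>
    (hderiv t ht).deriv.symm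

end SmoothAbs

section Objective

variable {a q δ τs : ℝ}

theorem le_one_of_forall_le_abs_sub_add_smoothAbs (ha : 0 ≤ a) (hq : q ≠ 0) (hτ : 0 < τs)
    (hmin : ∀ τ, δ * smoothAbs a q τs ≤ |τs - τ| + δ * smoothAbs a q τ) :
    δ * (τs ^ (q - 1) * (a + τs ^ q) ^ (1 / q - 1)) ≤ 1 := by
  refine ((hasDerivAt_smoothAbs ha hq hτ).const_mul δ).le_of_forall_lt_sub_le fun τ hτ' => ?_
  have := hmin τ
  rw [abs_of_pos (sub_pos.2 hτ')] at this
  linarith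

theorem forall_le_abs_sub_add_smoothAbs (ha : 0 ≤ a) (hq : 1 ≤ q) (hτ : 0 < τs) (hδ : 0 ≤ δ)
    (hle : δ * (τs ^ (q - 1) * (a + τs ^ q) ^ (1 / q - 1)) ≤ 1) (τ : ℝ) :
    δ * smoothAbs a q τs ≤ |τs - τ| + δ * smoothAbs a q τ := by
  set c := τs ^ (q - 1) * (a + τs ^ q) ^ (1 / q - 1)
  have hc : 0 ≤ δ * c := by positivity
  have htangent : smoothAbs a q τs + c * (|τ| - τs) ≤ smoothAbs a q τ := by
    have := (convexOn_smoothAbs_Ici ha hq).add_mul_sub_le_of_hasDerivAt hτ.le (abs_nonneg τ)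
      (hasDerivAt_smoothAbs ha (by positivity) hτ)
    rwa [smoothAbs_abs] at this
  have hdist : δ * c * (τs - |τ|) ≤ |τs - τ| :=
    calc δ * c * (τs - |τ|) ≤ δ * c * |τs - abs τ| :=
          mul_le_mul_of_nonneg_left (le_abs_self _) hc
      _ ≤ |τs - abs τ| := mul_le_of_le_one_left (abs_nonneg _) hle
      _ ≤ |τs - τ| := by simpa [abs_of_pos hτ] using abs_abs_sub_abs_le_abs_sub τs τ
  linarith [mul_le_mul_of_nonneg_left htangent hδ]

theorem forall_le_abs_sub_add_smoothAbs_iff (ha : 0 ≤ a) (hq : 1 ≤ q) (hτ : 0 < τs)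
    (hδ : 0 ≤ δ) :
    (∀ τ, δ * smoothAbs a q τs ≤ |τs - τ| + δ * smoothAbs a q τ) ↔
      δ * (τs ^ (q - 1) * (a + τs ^ q) ^ (1 / q - 1)) ≤ 1 :=
  ⟨le_one_of_forall_le_abs_sub_add_smoothAbs ha (by positivity) hτ,
    forall_le_abs_sub_add_smoothAbs ha hq hτ hδ⟩

end Objective

theorem stmt_6 (q τs δ : ℝ) (hq : 1 < q) (hτ : 0 < τs) (hδ : 0 ≤ δ)
    (M : ℝ → ℝ)
    (hM : M = fun τ : ℝ => |τs - τ| + δ * (2 + |τ| ^ q) ^ (1 / q)) :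
    ((∀ τ : ℝ, M τs ≤ M τ) ↔ δ * τs ^ (q - 1) * (2 + τs ^ q) ^ (1 / q - 1) ≤ 1) ∧
    ((∀ τ : ℝ, M τs ≤ M τ) ↔ δ ≤ (2 / τs ^ q + 1) ^ (1 - 1 / q)) := by
  have hmin : (∀ τ, M τs ≤ M τ) ↔ δ * (τs ^ (q - 1) * (2 + τs ^ q) ^ (1 / q - 1)) ≤ 1 := by
    subst hM
    simp only [sub_self, abs_zero, zero_add]
    exact forall_le_abs_sub_add_smoothAbs_iff zero_le_two hq.le hτ hδ
  refine ⟨by rw [hmin, mul_assoc], ?_⟩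
  rw [hmin, rpow_sub_one_mul_add_rpow_rpow_eq_inv zero_le_two (by positivity) hτ,
    ← div_eq_mul_inv, div_le_one (by positivity)]
end

section
/- Let q > 1, τ* > 0, and 0 ≤ δ ≤ (2/(τ*)^q + 1)^(1 - 1/q). Then for all τ ∈ ℝ, |τ* - τ| + δ·(2 + |τ|^q)^(1/q) ≥ δ·(2 + (τ*)^q)^(1/q), i.e., the minimax value under homogeneous treatment effects is attained at τ* (delayed shrinkage). -/
/-!
The map `t ↦ (2 + |t|^q)^(1/q)` is the `ℓ^q` norm of `(2^(1/q), t)`, so Hölder's inequality gives it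
a supporting line at `τ*` of slope `k = (τ*^q / (2 + τ*^q))^(1 - 1/q)`. The bound on `δ` says exactly
`δ k ≤ 1`: moving `τ` away from `τ*` lowers the penalty `δ (2 + |τ|^q)^(1/q)` by at most what it
adds to `|τ* - τ|`.
-/

open Real Finset

section
variable {p c x y : ℝ}

theorem add_mul_rpow_sub_one_le (hp : 1 < p) (hc : 0 ≤ c) (hx : 0 ≤ x) (hy : 0 ≤ y) :
    c + x * y ^ (p - 1) ≤ (c + x ^ p) ^ (1 / p) * (c + y ^ p) ^ (1 - 1 / p) := by
  have hp₀ : p ≠ 0 := by positivity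
  have hp₁ : p - 1 ≠ 0 := sub_ne_zero.2 hp.ne'
  set r := p.conjExponent with hr
  have hpr : p.HolderConjugate r := .conjExponent hp
  have h1r : 1 / r = 1 - 1 / p := by rw [hr, conjExponent]; field_simp
  have holder := inner_le_Lp_mul_Lq_of_nonneg (s := univ) hpr
    (f := ![c ^ (1 / p), x]) (g := ![c ^ (1 - 1 / p), y ^ (p - 1)])
    (fun i _ => by fin_cases i <;> simp <;> positivity)
    (fun i _ => by fin_cases i <;> simp <;> positivity)
  simp only [Fin.sum_univ_two, Matrix.cons_val_zero, Matrix.cons_val_one] at holder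
  rwa [← rpow_add' hc (by simp), add_sub_cancel, rpow_one, ← rpow_mul hc, ← rpow_mul hc,
    ← rpow_mul hy, one_div_mul_cancel hp₀, rpow_one, ← h1r, one_div_mul_cancel hpr.symm.ne_zero,
    rpow_one, show (p - 1) * r = p by rw [hr, conjExponent]; field_simp, h1r] at holder

theorem add_rpow_rpow_one_div_sub_le (hp : 1 < p) (hc : 0 ≤ c) (hx : 0 ≤ x) (hy : 0 < y) :
    (c + y ^ p) ^ (1 / p) - (c + x ^ p) ^ (1 / p) ≤
      (y ^ p / (c + y ^ p)) ^ (1 - 1 / p) * (y - x) := by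
  have hB : 0 < c + y ^ p := by positivity
  have hK : 0 < (c + y ^ p) ^ (1 - 1 / p) := by positivity
  have hBK : (c + y ^ p) ^ (1 / p) * (c + y ^ p) ^ (1 - 1 / p) = c + y ^ p := by
    rw [← rpow_add hB, add_sub_cancel, rpow_one]
  have hslope :
      (y ^ p / (c + y ^ p)) ^ (1 - 1 / p) = y ^ (p - 1) / (c + y ^ p) ^ (1 - 1 / p) := by
    rw [div_rpow (by positivity) hB.le, ← rpow_mul hy.le, mul_one_sub,
      mul_one_div_cancel (by positivity)]
  have hy_pow : y ^ p = y ^ (p - 1) * y := by rw [rpow_sub_one hy.ne', div_mul_cancel₀ _ hy.ne']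
  rw [hslope, div_mul_eq_mul_div, le_div_iff₀ hK, sub_mul, hBK]
  nlinarith [add_mul_rpow_sub_one_le hp hc hx hy.le]
end

theorem stmt_7 (q τs δ : ℝ) (hq : 1 < q) (hτ : 0 < τs) (hδ0 : 0 ≤ δ)
    (hδ : δ ≤ (2 / τs ^ q + 1) ^ (1 - 1 / q)) :
    ∀ τ : ℝ, |τs - τ| + δ * (2 + |τ| ^ q) ^ (1 / q) ≥ δ * (2 + τs ^ q) ^ (1 / q) := by
  intro τ
  set k := (τs ^ q / (2 + τs ^ q)) ^ (1 - 1 / q)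
  have hk : 0 < k := by positivity
  have hδk : δ * k ≤ 1 := by
    have hδ' : δ ≤ k⁻¹ := hδ.trans_eq <| by
      rw [← inv_rpow (by positivity), inv_div, add_div, div_self (by positivity)]
    calc δ * k ≤ k⁻¹ * k := by gcongr
      _ = 1 := inv_mul_cancel₀ hk.ne'
  have hdist : δ * k * (τs - |τ|) ≤ |τs - τ| := calc
    δ * k * (τs - |τ|) ≤ δ * k * abs (τs - |τ|) := by gcongr; exact le_abs_self _
    _ ≤ abs (τs - |τ|) := mul_le_of_le_one_left (abs_nonneg _) hδk
    _ ≤ |τs - τ| := by simpa [abs_of_pos hτ] using abs_abs_sub_abs_le_abs_sub τs τ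
  have tangent := add_rpow_rpow_one_div_sub_le hq zero_le_two (abs_nonneg τ) hτ
  have hpenalty := mul_le_mul_of_nonneg_left tangent hδ0
  rw [mul_sub, ← mul_assoc] at hpenalty
  linarith
end

section
/- Let V > 0, δ > 0, q > 1, and τ* > 0. If τ₀ > 0 is a critical point of M(τ) = √(V + (τ* - τ)²) + δ·(2 + τ^q)^(1/q), i.e., (τ₀ - τ*)/√(V + (τ* - τ₀)²) + δ·τ₀^(q-1)·(2 + τ₀^q)^(1/q - 1) = 0, then 0 < τ₀ < τ*. In particular, the minimizer of M is strictly smaller than τ* in magnitude whenever V > 0 and δ > 0 (immediate shrinkage under heterogeneous treatment effects). -/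
theorem stmt_9 (V δ q τs τ₀ : ℝ) (hV : 0 < V) (hδ : 0 < δ) (hq : 1 < q)
    (hτs : 0 < τs) (hτ₀ : 0 < τ₀)
    (hcrit : (τ₀ - τs) / Real.sqrt (V + (τs - τ₀) ^ 2) +
      δ * τ₀ ^ (q - 1) * (2 + τ₀ ^ q) ^ (1 / q - 1) = 0) :
    0 < τ₀ ∧ τ₀ < τs := by
  refine ⟨hτ₀, ?_⟩
  have hsq : 0 < Real.sqrt (V + (τs - τ₀) ^ 2) :=
    Real.sqrt_pos.mpr (by positivity)
  have hpos : 0 < δ * τ₀ ^ (q - 1) * (2 + τ₀ ^ q) ^ (1 / q - 1) := by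
    have h1 : (0:ℝ) < τ₀ ^ (q - 1) := Real.rpow_pos_of_pos hτ₀ _
    have h2 : (0:ℝ) < (2 + τ₀ ^ q) := by
      have := Real.rpow_pos_of_pos hτ₀ q; linarith
    have h3 : (0:ℝ) < (2 + τ₀ ^ q) ^ (1 / q - 1) := Real.rpow_pos_of_pos h2 _
    positivity
  have hneg : (τ₀ - τs) / Real.sqrt (V + (τs - τ₀) ^ 2) < 0 := by linarith
  have := (div_neg_iff.mp hneg)
  rcases this with ⟨_, h⟩ | ⟨h, _⟩
  · linarith
  · linarith
end

section
/- Let τ* > 0, δ > 0, q > 1, and 0 < V₁ ≤ V₂. Let τᵢ denote the unique minimizer of Mᵢ(τ) = √(Vᵢ + (τ* - τ)²) + δ·(2 + |τ|^q)^(1/q) for i = 1, 2. Then 0 ≤ τ₂ ≤ τ₁ ≤ τ*: the minimizer is monotonically decreasing in the variance V. -/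
lemma aux_mem (τs δ q V τ : ℝ) (hτs : 0 < τs) (hδ : 0 < δ) (hq : 1 < q) (hV : 0 < V)
    (h : ∀ σ : ℝ, Real.sqrt (V + (τs - τ) ^ 2) + δ * (2 + |τ| ^ q) ^ (1 / q) ≤
        Real.sqrt (V + (τs - σ) ^ 2) + δ * (2 + |σ| ^ q) ^ (1 / q)) :
    0 ≤ τ ∧ τ ≤ τs := by
  have hq0 : (0:ℝ) < q := by linarith
  have hq0' : 0 < 1/q := by positivity
  constructor
  · by_contra hneg
    push_neg at hneg
    have h0 := h 0
    rw [abs_zero, Real.zero_rpow (ne_of_gt hq0), add_zero, sub_zero] at h0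
    have hs : Real.sqrt (V + τs ^ 2) ≤ Real.sqrt (V + (τs - τ) ^ 2) := by
      apply Real.sqrt_le_sqrt; nlinarith
    have hp : (2:ℝ) ^ (1/q) < (2 + |τ| ^ q) ^ (1/q) := by
      apply Real.rpow_lt_rpow (by norm_num) _ hq0'
      have : 0 < |τ| ^ q := Real.rpow_pos_of_pos (abs_pos.mpr (by linarith)) q
      linarith
    exact absurd h0 (not_le.mpr (add_lt_add_of_le_of_lt hs (mul_lt_mul_of_pos_left hp hδ)))
  · by_contra hgt
    push_neg at hgt
    have h0 := h τs
    rw [sub_self] at h0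
    have hs : Real.sqrt (V + 0 ^ 2) ≤ Real.sqrt (V + (τs - τ) ^ 2) := by
      apply Real.sqrt_le_sqrt; nlinarith [sq_nonneg (τs - τ)]
    have hp : (2 + |τs| ^ q) ^ (1/q) < (2 + |τ| ^ q) ^ (1/q) := by
      apply Real.rpow_lt_rpow (by positivity) _ hq0'
      have : |τs| ^ q < |τ| ^ q := by
        apply Real.rpow_lt_rpow (abs_nonneg _) _ hq0
        rw [abs_of_pos hτs, abs_of_pos (by linarith : (0:ℝ) < τ)]
        exact hgt
      linarith
    exact absurd h0 (not_le.mpr (add_lt_add_of_le_of_lt hs (mul_lt_mul_of_pos_left hp hδ)))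

lemma aux_sqrtdiff {V₁ V₂ a b : ℝ} (hV₁ : 0 < V₁) (hV : V₁ < V₂) (hb : 0 ≤ b) (hab : b < a) :
    Real.sqrt (V₂ + a) + Real.sqrt (V₁ + b) < Real.sqrt (V₁ + a) + Real.sqrt (V₂ + b) := by
  set A := Real.sqrt (V₁ + a) with hAdef
  set B := Real.sqrt (V₁ + b) with hBdef
  set C := Real.sqrt (V₂ + a) with hCdef
  set D := Real.sqrt (V₂ + b) with hDdef
  have hA : A ^ 2 = V₁ + a := Real.sq_sqrt (by linarith)
  have hB : B ^ 2 = V₁ + b := Real.sq_sqrt (by linarith)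
  have hC : C ^ 2 = V₂ + a := Real.sq_sqrt (by linarith)
  have hD : D ^ 2 = V₂ + b := Real.sq_sqrt (by linarith)
  have hB0 : 0 < B := Real.sqrt_pos.mpr (by linarith)
  have hCA : A < C := Real.sqrt_lt_sqrt (by linarith) (by linarith)
  have hDB : B < D := Real.sqrt_lt_sqrt (by linarith) (by linarith)
  have hAB : B < A := Real.sqrt_lt_sqrt (by linarith) (by linarith)
  by_contra hcon
  push_neg at hcon
  have h1 : A - B ≤ C - D := by linarith
  have h3 : A + B < C + D := by linarith
  have key : (A - B) * (A + B) < (C - D) * (C + D) :=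
    lt_of_le_of_lt (mul_le_mul_of_nonneg_right h1 (by linarith))
      (mul_lt_mul_of_pos_left h3 (by linarith))
  nlinarith [key]

lemma aux_strict {V x y : ℝ} (hV : 0 < V) (hxy : x ≠ y) :
    2 * Real.sqrt (V + ((x + y) / 2) ^ 2) < Real.sqrt (V + x ^ 2) + Real.sqrt (V + y ^ 2) := by
  have hx : (0:ℝ) ≤ V + x ^ 2 := by positivity
  have hy : (0:ℝ) ≤ V + y ^ 2 := by positivity
  have hsub : x - y ≠ 0 := sub_ne_zero.mpr hxy
  have hsq : 0 < (x - y) ^ 2 := by positivity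
  have hprod : V + x * y < Real.sqrt ((V + x ^ 2) * (V + y ^ 2)) := by
    rcases le_or_gt (V + x * y) 0 with h | h
    · exact lt_of_le_of_lt h (Real.sqrt_pos.mpr (by positivity))
    · apply (Real.lt_sqrt h.le).mpr
      nlinarith [mul_pos hV hsq]
  have hs : Real.sqrt ((V + x ^ 2) * (V + y ^ 2)) =
      Real.sqrt (V + x ^ 2) * Real.sqrt (V + y ^ 2) := Real.sqrt_mul hx _
  refine lt_of_pow_lt_pow_left₀ 2 (by positivity) ?_
  have h1 : Real.sqrt (V + ((x + y) / 2) ^ 2) ^ 2 = V + ((x + y) / 2) ^ 2 :=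
    Real.sq_sqrt (by positivity)
  have h2 : Real.sqrt (V + x ^ 2) ^ 2 = V + x ^ 2 := Real.sq_sqrt hx
  have h3 : Real.sqrt (V + y ^ 2) ^ 2 = V + y ^ 2 := Real.sq_sqrt hy
  nlinarith [hprod, hs, h1, h2, h3]

lemma aux_pen {q x y : ℝ} (hq : 1 < q) (hx : 0 ≤ x) (hy : 0 ≤ y) :
    2 * (2 + ((x + y) / 2) ^ q) ^ (1 / q) ≤ (2 + x ^ q) ^ (1 / q) + (2 + y ^ q) ^ (1 / q) := by
  have hq0 : (0:ℝ) < q := by linarith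
  have hqne : q ≠ 0 := ne_of_gt hq0
  set c : ℝ := (2:ℝ) ^ (1/q) with hc
  have hc0 : 0 < c := Real.rpow_pos_of_pos (by norm_num) _
  have hcq : c ^ q = 2 := by
    rw [hc, ← Real.rpow_mul (by norm_num : (0:ℝ) ≤ 2), one_div, inv_mul_cancel₀ hqne,
      Real.rpow_one]
  have h2q0 : (0:ℝ) < 2 ^ q := Real.rpow_pos_of_pos (by norm_num) _
  have h2q : ((2:ℝ) ^ q) ^ (1/q) = 2 := by
    rw [← Real.rpow_mul (by norm_num : (0:ℝ) ≤ 2), mul_one_div, div_self hqne, Real.rpow_one]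
  have half : ∀ t : ℝ, 0 ≤ t → ((2 + t ^ q) / 2 ^ q) ^ (1/q) = (2 + t ^ q) ^ (1/q) / 2 := by
    intro t ht
    rw [Real.div_rpow (by positivity) h2q0.le, h2q]
  have key := Real.Lp_add_le_of_nonneg (s := (Finset.univ : Finset (Fin 2)))
      (f := ![c/2, x/2]) (g := ![c/2, y/2]) (p := q) hq.le
      (by intro i _; fin_cases i <;> simp <;> positivity)
      (by intro i _; fin_cases i <;> simp <;> positivity)
  simp only [Fin.sum_univ_two, Matrix.cons_val_zero, Matrix.cons_val_one, Matrix.head_cons] at key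
  have e0 : c/2 + c/2 = c := by ring
  have e1 : x/2 + y/2 = (x + y)/2 := by ring
  rw [e0, e1, hcq] at key
  have e2 : (c/2) ^ q = 2 / 2 ^ q := by
    rw [Real.div_rpow hc0.le (by norm_num : (0:ℝ) ≤ 2), hcq]
  have e3 : (x/2) ^ q = x ^ q / 2 ^ q := Real.div_rpow hx (by norm_num : (0:ℝ) ≤ 2) q
  have e4 : (y/2) ^ q = y ^ q / 2 ^ q := Real.div_rpow hy (by norm_num : (0:ℝ) ≤ 2) q
  rw [e2, e3, e4] at key
  have e5 : 2 / 2 ^ q + x ^ q / 2 ^ q = (2 + x ^ q) / 2 ^ q := by ring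
  have e6 : 2 / 2 ^ q + y ^ q / 2 ^ q = (2 + y ^ q) / 2 ^ q := by ring
  rw [e5, e6, half x hx, half y hy] at key
  linarith

theorem stmt_18 (τs δ q V₁ V₂ τ₁ τ₂ : ℝ) (hτs : 0 < τs) (hδ : 0 < δ) (hq : 1 < q)
    (hV₁ : 0 < V₁) (hV : V₁ ≤ V₂)
    (h₁ : ∀ τ : ℝ,
      Real.sqrt (V₁ + (τs - τ₁) ^ 2) + δ * (2 + |τ₁| ^ q) ^ (1 / q) ≤
        Real.sqrt (V₁ + (τs - τ) ^ 2) + δ * (2 + |τ| ^ q) ^ (1 / q))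
    (h₂ : ∀ τ : ℝ,
      Real.sqrt (V₂ + (τs - τ₂) ^ 2) + δ * (2 + |τ₂| ^ q) ^ (1 / q) ≤
        Real.sqrt (V₂ + (τs - τ) ^ 2) + δ * (2 + |τ| ^ q) ^ (1 / q)) :
    0 ≤ τ₂ ∧ τ₂ ≤ τ₁ ∧ τ₁ ≤ τs := by
  obtain ⟨h1l, h1r⟩ := aux_mem τs δ q V₁ τ₁ hτs hδ hq hV₁ h₁
  obtain ⟨h2l, h2r⟩ := aux_mem τs δ q V₂ τ₂ hτs hδ hq (lt_of_lt_of_le hV₁ hV) h₂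
  refine ⟨h2l, ?_, h1r⟩
  by_contra hcon
  push_neg at hcon
  have hab : (τs - τ₂) ^ 2 < (τs - τ₁) ^ 2 := by nlinarith
  rcases lt_or_eq_of_le hV with hVlt | hVeq
  · have hA := h₁ τ₂
    have hB := h₂ τ₁
    have hd := aux_sqrtdiff (a := (τs - τ₁) ^ 2) (b := (τs - τ₂) ^ 2) hV₁ hVlt
      (sq_nonneg _) hab
    linarith
  · subst hVeq
    have hm := h₁ ((τ₁ + τ₂)/2)
    have hm2 := h₂ ((τ₁ + τ₂)/2)
    have hm0 : 0 ≤ (τ₁ + τ₂)/2 := by linarith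
    rw [abs_of_nonneg h1l, abs_of_nonneg hm0] at hm
    rw [abs_of_nonneg h2l, abs_of_nonneg hm0] at hm2
    have hxy : τs - τ₁ ≠ τs - τ₂ := fun h => (ne_of_lt hcon) (by linarith)
    have hstrict := aux_strict (V := V₁) (x := τs - τ₁) (y := τs - τ₂) hV₁ hxy
    have hmid : (τs - τ₁ + (τs - τ₂)) / 2 = τs - (τ₁ + τ₂)/2 := by ring
    rw [hmid] at hstrict
    have hpen := aux_pen hq h1l h2l
    have hpen' := mul_le_mul_of_nonneg_left hpen hδ.le
    nlinarith [hm, hm2, hstrict, hpen']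
end
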